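/- arXiv:1906.07215 — 2 statements merged into one kernel-verified Lean document; each statement's English description precedes it below -/
import Mathlib

section
/- Let β be a cobaric structure on a strictly ℤ^n-graded abelian category C. The truncation functors β_{≻g} : C → C_{≻g} and β_{⪯g} : C → C_{⪯g} are exact: for every short exact sequence 0 → X → Y → Z → 0 in C, the sequences 0 → β_{≻g}X → β_{≻g}Y → β_{≻g}Z → 0 and 0 → β_{⪯g}X → β_{⪯g}Y → β_{⪯g}Z → 0 are exact. -/
open CategoryTheory CategoryTheory.Limits
open scoped Pseudoelement

/-- Exactness of a composable pair in an abelian category. -/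
def ExactAt {C : Type*} [Category C] [Abelian C] {X Y Z : C}
    (f : X ⟶ Y) (g : Y ⟶ Z) : Prop :=
  ∃ w : f ≫ g = 0, (CategoryTheory.ShortComplex.mk f g w).Exact

/-- A class of objects is thick if it is closed under subobjects, quotients and
extensions. -/
def ThickPred {C : Type*} [Category C] [Abelian C] (P : C → Prop) : Prop :=
  (∀ (X Y : C) (f : X ⟶ Y), Mono f → P Y → P X) ∧
  (∀ (X Y : C) (f : X ⟶ Y), Epi f → P X → P Y) ∧
  (∀ (X Y Z : C) (f : X ⟶ Y) (g : Y ⟶ Z), Mono f → Epi g → ExactAt f g →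
    P X → P Z → P Y)

/-- for a cobaric structure on a (strictly `ℤ^n`-graded) abelian
category — at a fixed degree `g`, with thick subcategories `Ppos = C_{≻g}`,
`Pneg = C_{⪯g}`, truncations `bpos = β_{≻g}`, `bneg = β_{⪯g}` and defining short exact
sequences `0 → β_{≻g}X → X → β_{⪯g}X → 0` — the truncation functors are exact: every
short exact sequence `0 → X → Y → Z → 0` induces short exact sequences
`0 → β_{≻g}X → β_{≻g}Y → β_{≻g}Z → 0` and `0 → β_{⪯g}X → β_{⪯g}Y → β_{⪯g}Z → 0`. -/
theorem stmt_14 {C : Type*} [Category C] [Abelian C]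
    (Ppos Pneg : C → Prop)
    (hthickpos : ThickPred Ppos) (hthickneg : ThickPred Pneg)
    (bpos bneg : C → C)
    (ι : ∀ X : C, bpos X ⟶ X) (π : ∀ X : C, X ⟶ bneg X)
    (hpos : ∀ X, Ppos (bpos X)) (hneg : ∀ X, Pneg (bneg X))
    (hmono : ∀ X, Mono (ι X)) (hepi : ∀ X, Epi (π X))
    (hexact : ∀ X, ExactAt (ι X) (π X))
    (hhom : ∀ (X Y : C) (f : X ⟶ Y), Ppos X → Pneg Y → f = 0)
    (hext : ∀ (X Y Z : C) (f : X ⟶ Y) (g : Y ⟶ Z), Pneg X → Ppos Z →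
      Mono f → Epi g → ExactAt f g → ∃ s : Z ⟶ Y, s ≫ g = 𝟙 Z) :
    ∀ (X Y Z : C) (f : X ⟶ Y) (g : Y ⟶ Z), Mono f → Epi g → ExactAt f g →
      (∀ (fp : bpos X ⟶ bpos Y) (gp : bpos Y ⟶ bpos Z),
          ι X ≫ f = fp ≫ ι Y → ι Y ≫ g = gp ≫ ι Z →
          Mono fp ∧ Epi gp ∧ ExactAt fp gp) ∧
      (∀ (fm : bneg X ⟶ bneg Y) (gm : bneg Y ⟶ bneg Z),
          f ≫ π Y = π X ≫ fm → g ≫ π Z = π Y ≫ gm →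
          Mono fm ∧ Epi gm ∧ ExactAt fm gm) := by
  intro X Y Z f g hf hg hfg
  obtain ⟨wfg, hfg'⟩ := hfg
  obtain ⟨wX, hXe⟩ := hexact X
  obtain ⟨wY, hYe⟩ := hexact Y
  obtain ⟨wZ, hZe⟩ := hexact Z
  haveI := hmono X; haveI := hmono Y; haveI := hmono Z
  haveI := hepi X; haveI := hepi Y; haveI := hepi Z
  have cokX : IsColimit (CokernelCofork.ofπ (π X) wX) := hXe.gIsCokernel
  have kerY : IsLimit (KernelFork.ofι (ι Y) wY) := hYe.fIsKernel
  have kerZ : IsLimit (KernelFork.ofι (ι Z) wZ) := hZe.fIsKernel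
  -- the canonical induced map on the negative truncations
  obtain ⟨fbar, hfbar⟩ := CokernelCofork.IsColimit.desc' cokX (f ≫ π Y)
    (by rw [← Category.assoc]
        exact hhom _ _ _ (hpos X) (hneg Y))
  have hfbar : π X ≫ fbar = f ≫ π Y := hfbar
  -- the canonical induced map on the positive truncations
  obtain ⟨gp0, hgp0⟩ := KernelFork.IsLimit.lift' kerZ (ι Y ≫ g)
    (by rw [Category.assoc]
        exact hhom _ _ _ (hpos Y) (hneg Z))
  have hgp0 : gp0 ≫ ι Z = ι Y ≫ g := hgp0
  -- any induced map on negative truncations is a monomorphism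
  have monoFM : ∀ fm : bneg X ⟶ bneg Y, π X ≫ fm = f ≫ π Y → Mono fm := by
    intro fm hfm
    set k : kernel fm ⟶ bneg X := kernel.ι fm with hk
    have hu0 : (pullback.fst (π X) k ≫ f) ≫ π Y = 0 := by
      rw [Category.assoc, ← hfm, ← Category.assoc, pullback.condition,
        Category.assoc, kernel.condition, comp_zero]
    obtain ⟨u, hu⟩ := KernelFork.IsLimit.lift' kerY _ hu0
    have hu : u ≫ ι Y = pullback.fst (π X) k ≫ f := hu
    have hmu : Mono u := by
      haveI : Mono (u ≫ ι Y) := by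
        rw [hu]; exact mono_comp _ _
      exact mono_of_mono u (ι Y)
    have hX'pos : Ppos (pullback (π X) k) := hthickpos.1 _ _ u hmu (hpos Y)
    have hKpos : Ppos (kernel fm) :=
      hthickpos.2.1 _ _ (pullback.snd (π X) k) inferInstance hX'pos
    have hKneg : Pneg (kernel fm) := hthickneg.1 _ _ k inferInstance (hneg X)
    have hid : (𝟙 (kernel fm)) = 0 := hhom _ _ _ hKpos hKneg
    have hk0 : k = 0 := by rw [← Category.id_comp k, hid, zero_comp]
    exact Abelian.mono_of_kernel_ι_eq_zero _ hk0
  -- any induced map on positive truncations is an epimorphism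
  have epiGP : ∀ gp : bpos Y ⟶ bpos Z, gp ≫ ι Z = ι Y ≫ g → Epi gp := by
    intro gp hgp
    set D := pullback g (ι Z) with hD
    set p1 : D ⟶ Y := pullback.fst g (ι Z) with hp1
    set d : D ⟶ bpos Z := pullback.snd g (ι Z) with hd
    obtain ⟨wD, hDe⟩ := hexact D
    haveI := hmono D; haveI := hepi D
    have cokD : IsColimit (CokernelCofork.ofπ (π D) wD) := hDe.gIsCokernel
    set c : bpos Z ⟶ cokernel (ι D ≫ d) := cokernel.π _ with hc
    obtain ⟨e, he⟩ := CokernelCofork.IsColimit.desc' cokD (d ≫ c)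
      (by rw [← Category.assoc]; exact cokernel.condition _)
    have he : π D ≫ e = d ≫ c := he
    have hce : Epi e := by
      haveI : Epi (π D ≫ e) := by rw [he]; exact epi_comp _ _
      exact epi_of_epi (π D) e
    have hCneg : Pneg (cokernel (ι D ≫ d)) := hthickneg.2.1 _ _ e hce (hneg D)
    have hCpos : Ppos (cokernel (ι D ≫ d)) :=
      hthickpos.2.1 _ _ c inferInstance (hpos Z)
    have hid : (𝟙 (cokernel (ι D ≫ d))) = 0 := hhom _ _ _ hCpos hCneg
    have hc0 : c = 0 := by rw [← Category.comp_id c, hid, comp_zero]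
    haveI hepiD : Epi (ι D ≫ d) := Abelian.epi_of_cokernel_π_eq_zero _ hc0
    obtain ⟨m, hm⟩ := KernelFork.IsLimit.lift' kerY (ι D ≫ p1)
      (by rw [Category.assoc]; exact hhom _ _ _ (hpos D) (hneg Y))
    have hm : m ≫ ι Y = ι D ≫ p1 := hm
    have hmgp : m ≫ gp = ι D ≫ d := by
      have h : (m ≫ gp) ≫ ι Z = (ι D ≫ d) ≫ ι Z := by
        rw [Category.assoc, hgp, ← Category.assoc, hm, Category.assoc,
          pullback.condition, ← Category.assoc]
      exact (cancel_mono (ι Z)).1 h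
    haveI : Epi (m ≫ gp) := by rw [hmgp]; exact hepiD
    exact epi_of_epi m gp
  constructor
  · -- positive truncations
    intro fp gp hfp hgp
    have hmfp : Mono fp := by
      haveI : Mono (fp ≫ ι Y) := by rw [← hfp]; exact mono_comp _ _
      exact mono_of_mono fp (ι Y)
    have hgpe : Epi gp := epiGP gp hgp.symm
    refine ⟨hmfp, hgpe, ?_⟩
    have w : fp ≫ gp = 0 := by
      have h : (fp ≫ gp) ≫ ι Z = 0 ≫ ι Z := by
        rw [Category.assoc, ← hgp, ← Category.assoc, ← hfp, Category.assoc,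
          wfg, comp_zero, zero_comp]
      exact (cancel_mono (ι Z)).1 h
    refine ⟨w, Abelian.Pseudoelement.exact_of_pseudo_exact _ ?_⟩
    intro b hb
    have hb' : gp b = 0 := hb
    have h1 : g ((ι Y) b) = 0 := by
      rw [← Abelian.Pseudoelement.comp_apply, hgp,
        Abelian.Pseudoelement.comp_apply, hb', Abelian.Pseudoelement.apply_zero]
    obtain ⟨x, hx⟩ := Abelian.Pseudoelement.pseudo_exact_of_exact hfg' _ h1
    have hx : f x = (ι Y) b := hx
    have h2 : fbar ((π X) x) = 0 := by
      rw [← Abelian.Pseudoelement.comp_apply, hfbar,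
        Abelian.Pseudoelement.comp_apply, hx,
        ← Abelian.Pseudoelement.comp_apply, wY, Abelian.Pseudoelement.zero_apply]
    haveI := monoFM fbar hfbar
    have h3 : (π X) x = 0 :=
      Abelian.Pseudoelement.zero_of_map_zero _
        (Abelian.Pseudoelement.pseudo_injective_of_mono fbar) _ h2
    obtain ⟨x', hx'⟩ := Abelian.Pseudoelement.pseudo_exact_of_exact hXe _ h3
    have hx' : (ι X) x' = x := hx'
    refine ⟨x', Abelian.Pseudoelement.pseudo_injective_of_mono (ι Y) ?_⟩
    show (ι Y) (fp x') = (ι Y) b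
    rw [← Abelian.Pseudoelement.comp_apply, ← hfp,
      Abelian.Pseudoelement.comp_apply, hx', hx]
  · -- negative truncations
    intro fm gm hfm hgm
    have hmfm : Mono fm := monoFM fm hfm.symm
    have hegm : Epi gm := by
      haveI : Epi (π Y ≫ gm) := by rw [← hgm]; exact epi_comp _ _
      exact epi_of_epi (π Y) gm
    refine ⟨hmfm, hegm, ?_⟩
    have w : fm ≫ gm = 0 := by
      have h : π X ≫ fm ≫ gm = π X ≫ 0 := by
        rw [comp_zero, ← Category.assoc, ← hfm, Category.assoc, ← hgm,
          ← Category.assoc, wfg, zero_comp]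
      exact (cancel_epi (π X)).1 h
    refine ⟨w, Abelian.Pseudoelement.exact_of_pseudo_exact _ ?_⟩
    intro b hb
    have hb' : gm b = 0 := hb
    obtain ⟨y, hy⟩ := Abelian.Pseudoelement.pseudo_surjective_of_epi (π Y) b
    have h1 : (π Z) (g y) = 0 := by
      rw [← Abelian.Pseudoelement.comp_apply, hgm,
        Abelian.Pseudoelement.comp_apply, hy, hb']
    obtain ⟨z, hz⟩ := Abelian.Pseudoelement.pseudo_exact_of_exact hZe _ h1
    have hz : (ι Z) z = g y := hz
    haveI := epiGP gp0 hgp0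
    obtain ⟨y', hy'⟩ := Abelian.Pseudoelement.pseudo_surjective_of_epi gp0 z
    have h2 : g y = g ((ι Y) y') := by
      rw [← Abelian.Pseudoelement.comp_apply, ← hgp0,
        Abelian.Pseudoelement.comp_apply, hy', hz]
    obtain ⟨dd, hd0, hdprop⟩ := Abelian.Pseudoelement.sub_of_eq_image g _ _ h2
    obtain ⟨x, hx⟩ := Abelian.Pseudoelement.pseudo_exact_of_exact hfg' _ hd0
    have hx : f x = dd := hx
    refine ⟨(π X) x, ?_⟩
    show fm ((π X) x) = b
    have h3 : (π Y) ((ι Y) y') = 0 := by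
      rw [← Abelian.Pseudoelement.comp_apply, wY, Abelian.Pseudoelement.zero_apply]
    rw [← Abelian.Pseudoelement.comp_apply, ← hfm,
      Abelian.Pseudoelement.comp_apply, hx, hdprop _ (π Y) h3, hy]
end

section
/- Let β be a cobaric structure on a strictly ℤ^n-graded abelian category C, and g ≺ g' in ℤ^n. Then there are natural isomorphisms β_{⪯g} ∘ β_{⪯g'} ≅ β_{⪯g}, β_{⪰g} ∘ β_{⪰g'} ≅ β_{⪰g'}, β_{⪯g} ∘ β_{⪰g'} ≅ β_{⪰g'} ∘ β_{⪯g} ≅ 0, and β_{⪰g} ∘ β_{⪯g'} ≅ β_{⪯g'} ∘ β_{⪰g}. -/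
open CategoryTheory CategoryTheory.Limits

/-- The truncation data of a cobaric structure at a given cut of the degrees: a pair
of thick subcategories `(neg, pos)` (e.g. `(C_{⪯g}, C_{≻g})`) with `Hom(pos, neg) = 0`
and `Ext¹(pos, neg) = 0`, together with functorial short exact sequences
`0 → tpos X → X → tneg X → 0`. -/
structure CobaricCut (C : Type*) [Category C] [Abelian C] where
  neg : C → Prop
  pos : C → Prop
  tpos : C ⥤ C
  tneg : C ⥤ C
  ι : tpos ⟶ 𝟭 C
  π : 𝟭 C ⟶ tneg
  pos_mem : ∀ X, pos (tpos.obj X)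
  neg_mem : ∀ X, neg (tneg.obj X)
  mono : ∀ X, Mono (ι.app X)
  epi : ∀ X, Epi (π.app X)
  exact : ∀ X, ExactAt (ι.app X) (π.app X)
  hom0 : ∀ (X Y : C) (f : X ⟶ Y), pos X → neg Y → f = 0
  ext_split : ∀ (X Y Z : C) (f : X ⟶ Y) (g : Y ⟶ Z), neg X → pos Z →
    Mono f → Epi g → ExactAt f g → ∃ s : Z ⟶ Y, s ≫ g = 𝟙 Z
  neg_thick : ThickPred neg
  pos_thick : ThickPred pos

/-!
Since `Hom(pos, neg) = 0`, each cut makes `tneg X` the reflection of `X` into `neg` and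
`tpos X` its coreflection into `pos`. Hence `tneg` inverts every epimorphism whose kernel
lies in `pos`, and `tpos` every monomorphism whose cokernel lies in `neg`; with the nesting
`C_{≻g'} ⊆ C_{⪰g'} ⊆ C_{≻g} ⊆ C_{⪰g}` this gives the first two isomorphisms and the
vanishing of the mixed composites. For the commutation, a diagram chase shows that applying
`β_{⪯g'}` to `0 → β_{⪰g}X → X → β_{≺g}X → 0` leaves `0 → β_{⪯g'}β_{⪰g}X → β_{⪯g'}X → β_{≺g}X`
exact, so `β_{⪰g}` turns its first map into an isomorphism; and `β_{⪯g'}β_{⪰g}X`, a quotient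
of an object of `C_{⪰g}`, is its own `β_{⪰g}`.
-/

open CategoryTheory.Abelian Pseudoelement

namespace CobaricCut

variable {C : Type*} [Category C] [Abelian C]

section

variable (c : CobaricCut C)

instance (X : C) : Mono (c.ι.app X) := c.mono X

instance (X : C) : Epi (c.π.app X) := c.epi X

def shortComplex (X : C) : ShortComplex C :=
  ShortComplex.mk (c.ι.app X) (c.π.app X) (c.exact X).1

lemma shortComplex_exact (X : C) : (c.shortComplex X).Exact := (c.exact X).2

instance (X : C) : Mono (c.shortComplex X).f := c.mono X

instance (X : C) : Epi (c.shortComplex X).g := c.epi X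

noncomputable def descNeg {X N : C} (hN : c.neg N) (f : X ⟶ N) : c.tneg.obj X ⟶ N :=
  (c.shortComplex_exact X).desc f (c.hom0 _ _ _ (c.pos_mem X) hN)

@[simp]
lemma π_descNeg {X N : C} (hN : c.neg N) (f : X ⟶ N) : c.π.app X ≫ c.descNeg hN f = f :=
  (c.shortComplex_exact X).g_desc _ _

noncomputable def liftPos {P X : C} (hP : c.pos P) (f : P ⟶ X) : P ⟶ c.tpos.obj X :=
  (c.shortComplex_exact X).lift f (c.hom0 _ _ _ hP (c.neg_mem X))

@[simp]
lemma liftPos_ι {P X : C} (hP : c.pos P) (f : P ⟶ X) : c.liftPos hP f ≫ c.ι.app X = f :=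
  (c.shortComplex_exact X).lift_f _ _

lemma isZero_tneg_obj_of_pos {X : C} (hX : c.pos X) : IsZero (c.tneg.obj X) := by
  rw [IsZero.iff_id_eq_zero, ← cancel_epi (c.π.app X), c.hom0 _ _ (c.π.app X) hX (c.neg_mem X),
    zero_comp, zero_comp]

lemma isZero_tpos_obj_of_neg {c' : CobaricCut C} (hle : c'.pos ≤ c.pos) {Y : C}
    (hY : c.neg Y) : IsZero (c'.tpos.obj Y) := by
  rw [IsZero.iff_id_eq_zero, ← cancel_mono (c'.ι.app Y),
    c.hom0 _ _ (c'.ι.app Y) (hle _ (c'.pos_mem Y)) hY, comp_zero, comp_zero]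

lemma isIso_ι_app_of_pos {X : C} (hX : c.pos X) : IsIso (c.ι.app X) :=
  have : Epi (c.ι.app X) := (c.shortComplex_exact X).epi_f (c.hom0 _ _ _ hX (c.neg_mem X))
  isIso_of_mono_of_epi _

lemma isIso_tneg_map_of_exact {S : ShortComplex C} (hS : S.Exact) [Epi S.g]
    (h₁ : c.pos S.X₁) : IsIso (c.tneg.map S.g) := by
  let s : S.X₃ ⟶ c.tneg.obj S.X₂ := hS.desc (c.π.app S.X₂) (c.hom0 _ _ _ h₁ (c.neg_mem _))
  have hs : S.g ≫ s = c.π.app S.X₂ := hS.g_desc _ _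
  have ht : c.π.app S.X₃ ≫ c.descNeg (c.neg_mem _) s = s := c.π_descNeg _ _
  have hnat : S.g ≫ c.π.app S.X₃ = c.π.app S.X₂ ≫ c.tneg.map S.g := c.π.naturality S.g
  refine ⟨c.descNeg (c.neg_mem _) s, ?_, ?_⟩
  · rw [← cancel_epi (c.π.app S.X₂), ← Category.assoc, ← hnat, Category.assoc, ht, hs,
      Category.comp_id]
  · rw [← cancel_epi (c.π.app S.X₃), ← cancel_epi S.g, reassoc_of% ht, reassoc_of% hs, ← hnat,
      Category.comp_id]

lemma isIso_tpos_map_of_exact {S : ShortComplex C} (hS : S.Exact) [Mono S.f]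
    (h₃ : c.neg S.X₃) : IsIso (c.tpos.map S.f) := by
  let s : c.tpos.obj S.X₂ ⟶ S.X₁ := hS.lift (c.ι.app S.X₂) (c.hom0 _ _ _ (c.pos_mem _) h₃)
  have hs : s ≫ S.f = c.ι.app S.X₂ := hS.lift_f _ _
  have ht : c.liftPos (c.pos_mem _) s ≫ c.ι.app S.X₁ = s := c.liftPos_ι _ _
  have hnat : c.tpos.map S.f ≫ c.ι.app S.X₂ = c.ι.app S.X₁ ≫ S.f := c.ι.naturality S.f
  refine ⟨c.liftPos (c.pos_mem _) s, ?_, ?_⟩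
  · rw [← cancel_mono (c.ι.app S.X₁), ← cancel_mono S.f]
    simp only [Category.assoc, ht, hs, ← hnat, Category.id_comp]
  · rw [← cancel_mono (c.ι.app S.X₂)]
    simp only [Category.assoc, hnat, reassoc_of% ht, hs, Category.id_comp]

noncomputable def tnegCompTnegIso {d : CobaricCut C} (hle : d.pos ≤ c.pos) :
    d.tneg ⋙ c.tneg ≅ c.tneg :=
  have (X : C) : IsIso ((Functor.whiskerRight d.π c.tneg).app X) :=
    c.isIso_tneg_map_of_exact (d.shortComplex_exact X) (hle _ (d.pos_mem X))
  have := NatIso.isIso_of_isIso_app (Functor.whiskerRight d.π c.tneg)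
  (asIso (Functor.whiskerRight d.π c.tneg)).symm ≪≫ Functor.leftUnitor c.tneg

noncomputable def tposCompTposIso {b : CobaricCut C} (hle : c.pos ≤ b.pos) :
    c.tpos ⋙ b.tpos ≅ c.tpos :=
  have (X : C) : IsIso ((Functor.whiskerLeft c.tpos b.ι).app X) :=
    b.isIso_ι_app_of_pos (hle _ (c.pos_mem X))
  have := NatIso.isIso_of_isIso_app (Functor.whiskerLeft c.tpos b.ι)
  asIso (Functor.whiskerLeft c.tpos b.ι) ≪≫ Functor.rightUnitor c.tpos

end

section

variable {b d : CobaricCut C}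

noncomputable def tnegToTneg (hle : d.pos ≤ b.pos) (X : C) : d.tneg.obj X ⟶ b.tneg.obj X :=
  (d.shortComplex_exact X).desc (b.π.app X)
    (b.hom0 _ _ (d.ι.app X ≫ b.π.app X) (hle _ (d.pos_mem X)) (b.neg_mem X))

@[simp]
lemma π_tnegToTneg (hle : d.pos ≤ b.pos) (X : C) : d.π.app X ≫ tnegToTneg hle X = b.π.app X :=
  (d.shortComplex_exact X).g_desc _ _

lemma ι_app_comp_π_app (X : C) :
    b.ι.app X ≫ d.π.app X = d.π.app (b.tpos.obj X) ≫ d.tneg.map (b.ι.app X) :=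
  d.π.naturality (b.ι.app X)

lemma mono_tneg_map_ι (hle : d.pos ≤ b.pos) (X : C) : Mono (d.tneg.map (b.ι.app X)) := by
  refine mono_of_zero_of_map_zero _ fun t ht => ?_
  obtain ⟨y, rfl⟩ := pseudo_surjective_of_epi (d.π.app (b.tpos.obj X)) t
  have hy : d.π.app X (b.ι.app X y) = 0 := by
    rwa [← Pseudoelement.comp_apply, ι_app_comp_π_app, Pseudoelement.comp_apply]
  obtain ⟨p, hp⟩ : ∃ p : Pseudoelement (d.tpos.obj X), d.ι.app X p = b.ι.app X y :=
    pseudo_exact_of_exact (d.shortComplex_exact X) _ hy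
  obtain ⟨k, hk⟩ : ∃ k : d.tpos.obj X ⟶ b.tpos.obj X, k ≫ b.ι.app X = d.ι.app X :=
    ⟨_, b.liftPos_ι (hle _ (d.pos_mem X)) _⟩
  have hky : k p = y :=
    pseudo_injective_of_mono (b.ι.app X) (by rwa [← Pseudoelement.comp_apply, hk])
  rw [← hky, ← Pseudoelement.comp_apply, d.hom0 _ _ (k ≫ _) (d.pos_mem X) (d.neg_mem _),
    Pseudoelement.zero_apply]

lemma tneg_map_ι_comp_tnegToTneg (hle : d.pos ≤ b.pos) (X : C) :
    d.tneg.map (b.ι.app X) ≫ tnegToTneg hle X = 0 := by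
  rw [← cancel_epi (d.π.app _), ← Category.assoc, ← ι_app_comp_π_app]
  simp [(b.exact X).1]

lemma exact_tneg_map_ι (hle : d.pos ≤ b.pos) (X : C) :
    (ShortComplex.mk _ _ (tneg_map_ι_comp_tnegToTneg hle X)).Exact := by
  refine exact_of_pseudo_exact _ fun z hz => ?_
  obtain ⟨x, rfl⟩ := pseudo_surjective_of_epi (d.π.app X) z
  have hx : b.π.app X x = 0 := by rwa [← π_tnegToTneg hle, Pseudoelement.comp_apply]
  obtain ⟨y, rfl⟩ : ∃ y : Pseudoelement (b.tpos.obj X), b.ι.app X y = x :=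
    pseudo_exact_of_exact (b.shortComplex_exact X) x hx
  exact ⟨d.π.app _ y, by
    rw [← Pseudoelement.comp_apply, ← Pseudoelement.comp_apply, ι_app_comp_π_app]⟩

lemma pos_tneg_obj {Y : C} (hY : b.pos Y) : b.pos (d.tneg.obj Y) :=
  b.pos_thick.2.1 _ _ (d.π.app Y) inferInstance hY

noncomputable def tnegCompTposIso (hle : d.pos ≤ b.pos) : d.tneg ⋙ b.tpos ≅ b.tpos ⋙ d.tneg :=
  have (X : C) : IsIso ((Functor.whiskerRight b.ι (d.tneg ⋙ b.tpos)).app X) :=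
    have := mono_tneg_map_ι hle X
    b.isIso_tpos_map_of_exact (exact_tneg_map_ι hle X) (b.neg_mem X)
  have := NatIso.isIso_of_isIso_app (Functor.whiskerRight b.ι (d.tneg ⋙ b.tpos))
  have (X : C) : IsIso ((Functor.whiskerLeft (b.tpos ⋙ d.tneg) b.ι).app X) :=
    b.isIso_ι_app_of_pos (pos_tneg_obj (b.pos_mem X))
  have := NatIso.isIso_of_isIso_app (Functor.whiskerLeft (b.tpos ⋙ d.tneg) b.ι)
  (Functor.leftUnitor _).symm ≪≫ (asIso (Functor.whiskerRight b.ι (d.tneg ⋙ b.tpos))).symm ≪≫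
    asIso (Functor.whiskerLeft (b.tpos ⋙ d.tneg) b.ι) ≪≫ Functor.rightUnitor _

end

end CobaricCut

/-- `cB`, `cA`, `cC'`, `cD` are the cuts `(C_{≺g}, C_{⪰g})`, `(C_{⪯g}, C_{≻g})`,
`(C_{≺g'}, C_{⪰g'})`, `(C_{⪯g'}, C_{≻g'})`, so that `β_{⪯g} = cA.tneg`, `β_{⪰g} = cB.tpos`,
`β_{⪯g'} = cD.tneg` and `β_{⪰g'} = cC'.tpos`. -/
theorem stmt_15_general {C : Type*} [Category C] [Abelian C]
    (cB cA cC' cD : CobaricCut C)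
    (hDC : ∀ X, cD.pos X → cC'.pos X)
    (hCA : ∀ X, cC'.pos X → cA.pos X)
    (hAB : ∀ X, cA.pos X → cB.pos X) :
    Nonempty (cD.tneg ⋙ cA.tneg ≅ cA.tneg) ∧
    Nonempty (cC'.tpos ⋙ cB.tpos ≅ cC'.tpos) ∧
    (∀ X : C, IsZero (cA.tneg.obj (cC'.tpos.obj X)) ∧
      IsZero (cC'.tpos.obj (cA.tneg.obj X))) ∧
    Nonempty (cD.tneg ⋙ cB.tpos ≅ cB.tpos ⋙ cD.tneg) :=
  have hDA : cD.pos ≤ cA.pos := fun X h => hCA X (hDC X h)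
  have hCB : cC'.pos ≤ cB.pos := fun X h => hAB X (hCA X h)
  have hDB : cD.pos ≤ cB.pos := fun X h => hCB X (hDC X h)
  ⟨⟨cA.tnegCompTnegIso hDA⟩, ⟨cC'.tposCompTposIso hCB⟩,
    fun X => ⟨cA.isZero_tneg_obj_of_pos (hCA _ (cC'.pos_mem X)),
      cA.isZero_tpos_obj_of_neg hCA (cA.neg_mem X)⟩,
    ⟨CobaricCut.tnegCompTposIso hDB⟩⟩

/-- for a cobaric structure on a strictly `ℤ^n`-graded abelian category
and `g ≺ g'`, there are natural isomorphisms `β_{⪯g} ∘ β_{⪯g'} ≅ β_{⪯g}`,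
`β_{⪰g} ∘ β_{⪰g'} ≅ β_{⪰g'}`, `β_{⪯g} ∘ β_{⪰g'} ≅ β_{⪰g'} ∘ β_{⪯g} ≅ 0` and
`β_{⪰g} ∘ β_{⪯g'} ≅ β_{⪯g'} ∘ β_{⪰g}`.  Here the four relevant cuts are
`cB = (C_{≺g}, C_{⪰g})`, `cA = (C_{⪯g}, C_{≻g})`, `cC = (C_{≺g'}, C_{⪰g'})`,
`cD = (C_{⪯g'}, C_{≻g'})`, whose negative parts form a nested chain (as `g ≺ g'`), so
that `β_{⪯g} = cA.tneg`, `β_{⪰g} = cB.tpos`, `β_{⪯g'} = cD.tneg`,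
`β_{⪰g'} = cC.tpos`. -/
theorem stmt_15 {C : Type*} [Category C] [Abelian C]
    (cB cA cC' cD : CobaricCut C)
    (hBA : ∀ X, cB.neg X → cA.neg X)
    (hAC : ∀ X, cA.neg X → cC'.neg X)
    (hCD : ∀ X, cC'.neg X → cD.neg X)
    (hDC : ∀ X, cD.pos X → cC'.pos X)
    (hCA : ∀ X, cC'.pos X → cA.pos X)
    (hAB : ∀ X, cA.pos X → cB.pos X) :
    Nonempty (cD.tneg ⋙ cA.tneg ≅ cA.tneg) ∧
    Nonempty (cC'.tpos ⋙ cB.tpos ≅ cC'.tpos) ∧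
    (∀ X : C, IsZero (cA.tneg.obj (cC'.tpos.obj X)) ∧
      IsZero (cC'.tpos.obj (cA.tneg.obj X))) ∧
    Nonempty (cD.tneg ⋙ cB.tpos ≅ cB.tpos ⋙ cD.tneg) :=
  stmt_15_general cB cA cC' cD hDC hCA hAB
end
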